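/- arXiv:1808.00268 — 3 statements merged into one kernel-verified Lean document; each statement's English description precedes it below -/
import Mathlib

section
/- For every a > 0, b ≥ 0 and σ² > 0, the function τ ↦ (1 − τ) log₂(1 + a/(σ²(1 − τ) + b)) is concave on [0, 1). -/
/-!
Substituting `x = σ² (1 - τ) + b`, an affine function of `τ` that is positive on `[0, 1)`, the
throughput becomes `(σ² log 2)⁻¹ (x - b) log (1 + a / x)`, so it suffices that
`x ↦ (x - b) log (1 + a / x)` is concave on `x > 0`. Its second derivative only grows when
`b ≥ 0` is replaced by `0`, and for `b = 0` it equals `-a² / (x (x + a)²)`.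
-/

open Real Set

section

variable {a b x : ℝ}

theorem hasDerivAt_log_add_sub_log (hx : 0 < x) (ha : 0 ≤ a) :
    HasDerivAt (fun y => log (y + a) - log y) ((x + a)⁻¹ - x⁻¹) x := by
  simpa using
    (((hasDerivAt_id' x).add_const a).log (by positivity)).fun_sub (hasDerivAt_log hx.ne')

theorem hasDerivAt_inv_add_sub_inv (hx : 0 < x) (ha : 0 ≤ a) :
    HasDerivAt (fun y => (y + a)⁻¹ - y⁻¹) ((x ^ 2)⁻¹ - ((x + a) ^ 2)⁻¹) x := by
  refine (((hasDerivAt_id' x).add_const a).fun_inv (by positivity)).fun_sub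
    (hasDerivAt_inv hx.ne') |>.congr_deriv ?_
  ring

theorem hasDerivAt_sub_mul_log_add_sub_log (hx : 0 < x) (ha : 0 ≤ a) :
    HasDerivAt (fun y => (y - b) * (log (y + a) - log y))
      (log (x + a) - log x + (x - b) * ((x + a)⁻¹ - x⁻¹)) x := by
  simpa using ((hasDerivAt_id' x).sub_const b).fun_mul (hasDerivAt_log_add_sub_log hx ha)

theorem hasDerivAt_log_add_sub_log_add_sub_mul_inv_add_sub_inv (hx : 0 < x) (ha : 0 ≤ a) :
    HasDerivAt (fun y => log (y + a) - log y + (y - b) * ((y + a)⁻¹ - y⁻¹))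
      (2 * ((x + a)⁻¹ - x⁻¹) + (x - b) * ((x ^ 2)⁻¹ - ((x + a) ^ 2)⁻¹)) x := by
  refine (hasDerivAt_log_add_sub_log hx ha).fun_add
    (((hasDerivAt_id' x).sub_const b).fun_mul (hasDerivAt_inv_add_sub_inv hx ha))
    |>.congr_deriv ?_
  ring

theorem deriv2_sub_mul_log_add_sub_log_nonpos (hx : 0 < x) (ha : 0 ≤ a) (hb : 0 ≤ b) :
    2 * ((x + a)⁻¹ - x⁻¹) + (x - b) * ((x ^ 2)⁻¹ - ((x + a) ^ 2)⁻¹) ≤ 0 := by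
  have hxa : 0 < x + a := by positivity
  calc 2 * ((x + a)⁻¹ - x⁻¹) + (x - b) * ((x ^ 2)⁻¹ - ((x + a) ^ 2)⁻¹)
      ≤ 2 * ((x + a)⁻¹ - x⁻¹) + x * ((x ^ 2)⁻¹ - ((x + a) ^ 2)⁻¹) := by
        gcongr
        · rw [sub_nonneg]
          gcongr
          linarith
        · linarith
    _ = -(a ^ 2 / (x * (x + a) ^ 2)) := by
        field_simp
        ring
    _ ≤ 0 := by
        rw [neg_nonpos]
        positivity

theorem concaveOn_sub_mul_log_one_add_div (ha : 0 ≤ a) (hb : 0 ≤ b) :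
    ConcaveOn ℝ (Ioi 0) (fun x => (x - b) * log (1 + a / x)) := by
  have hlog : EqOn (fun x => (x - b) * (log (x + a) - log x))
      (fun x => (x - b) * log (1 + a / x)) (Ioi 0) := fun x (hx : 0 < x) => by
    dsimp only
    rw [← log_div (by positivity) hx.ne', add_div, div_self hx.ne']
  refine ConcaveOn.congr ?_ hlog
  exact concaveOn_of_hasDerivWithinAt2_nonpos (convex_Ioi 0)
    (fun x hx => (hasDerivAt_sub_mul_log_add_sub_log hx ha).continuousAt.continuousWithinAt)
    (fun x hx => (hasDerivAt_sub_mul_log_add_sub_log (interior_subset hx) ha).hasDerivWithinAt)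
    (fun x hx => (hasDerivAt_log_add_sub_log_add_sub_mul_inv_add_sub_inv
      (interior_subset hx) ha).hasDerivWithinAt)
    (fun x hx => deriv2_sub_mul_log_add_sub_log_nonpos (interior_subset hx) ha hb)

end

/-- For every `a > 0`, `b ≥ 0` and `σ² > 0`, the function
`τ ↦ (1 - τ) log₂(1 + a / (σ² (1 - τ) + b))` is concave on `[0, 1)`. -/
theorem lcd_user_throughput_concave_in_tau
    (a b σ2 : ℝ) (ha : 0 < a) (hb : 0 ≤ b) (hσ2 : 0 < σ2) :
    ConcaveOn ℝ (Set.Ico (0 : ℝ) 1)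
      (fun τ => (1 - τ) * Real.logb 2 (1 + a / (σ2 * (1 - τ) + b))) := by
  set L : ℝ →ᵃ[ℝ] ℝ := AffineMap.lineMap (σ2 + b) b
  have hL : ∀ τ, L τ = σ2 * (1 - τ) + b := fun τ => by
    rw [AffineMap.lineMap_apply_ring]
    ring
  have hmaps : Ico 0 1 ⊆ L ⁻¹' Ioi 0 := fun τ hτ => by
    have : 0 < 1 - τ := sub_pos.2 hτ.2
    rw [mem_preimage, hL, mem_Ioi]
    positivity
  have hscale : 0 ≤ (σ2 * log 2)⁻¹ := by positivity
  refine ((((concaveOn_sub_mul_log_one_add_div ha.le hb).comp_affineMap L).subset hmaps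
    (convex_Ico 0 1)).smul hscale).congr fun τ _ => ?_
  simp only [Function.comp_apply, smul_eq_mul, hL, add_sub_cancel_right, logb]
  field_simp
end

section
/- Fix K ≥ 1, σ² > 0, channel gains g_i ≥ 0 and energies E_i ≥ 0 with g_i E_i > 0 for each i. The LCD sum throughput τ ↦ ∑_{i=1}^{K} (1 − τ) log₂(1 + g_i E_i/(σ²(1 − τ) + ∑_{j≠i} g_j E_j)) is a concave function of τ on [0, 1). -/
/-!
Each user's rate is `t * log (1 + a / (c * t + b))` evaluated at `t = 1 - τ`, with `a = g i * E i`,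
`b` the interference power and `c = σ²`. Writing `u = c * t + b`, its second derivative in `t` is
`-c a ((a + 2 b) u + a b) / (u² (u + a)²) ≤ 0`, and concavity survives the affine substitution
`t = 1 - τ`, the positive factor `1 / log 2` and the sum over users.
-/

open Real Set Finset

theorem ConcaveOn.sum {𝕜 E β ι : Type*} [Semiring 𝕜] [PartialOrder 𝕜] [AddCommMonoid E]
    [AddCommMonoid β] [PartialOrder β] [IsOrderedAddMonoid β] [SMul 𝕜 E] [Module 𝕜 β]
    {s : Set E} {t : Finset ι} {f : ι → E → β} (hs : Convex 𝕜 s)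
    (hf : ∀ i ∈ t, ConcaveOn 𝕜 s (f i)) : ConcaveOn 𝕜 s fun x => ∑ i ∈ t, f i x := by
  simpa only [Finset.sum_fn] using
    Finset.sum_induction f (ConcaveOn 𝕜 s) (fun _ _ => ConcaveOn.add) (concaveOn_const 0 hs) hf

theorem ConcaveOn.comp_one_sub {s : Set ℝ} {f : ℝ → ℝ} (hf : ConcaveOn ℝ s f) :
    ConcaveOn ℝ ((1 - ·) ⁻¹' s) fun τ => f (1 - τ) := by
  have hline : ⇑(AffineMap.lineMap (1 : ℝ) 0) = (1 - ·) := funext fun τ => by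
    simp only [AffineMap.lineMap_apply_ring', zero_sub, mul_neg, mul_one]
    ring
  have := hf.comp_affineMap (AffineMap.lineMap (1 : ℝ) 0)
  rwa [hline] at this

theorem concaveOn_mul_log_one_add_div {a b c : ℝ} (ha : 0 ≤ a) (hb : 0 ≤ b) (hc : 0 < c) :
    ConcaveOn ℝ (Ioi 0) fun t => t * log (1 + a / (c * t + b)) := by
  have hu : ∀ t ∈ Ioi (0 : ℝ), 0 < c * t + b := fun t ht => by
    have : 0 < c * t := mul_pos hc ht
    linarith
  have hua : ∀ t ∈ Ioi (0 : ℝ), 0 < c * t + (b + a) := fun t ht => by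
    linarith [hu t ht]
  have hlin (d t : ℝ) : HasDerivAt (fun t => c * t + d) c t := by
    simpa using ((hasDerivAt_id t).const_mul c).add_const d
  have hlog (d t : ℝ) (h : 0 < c * t + d) :
      HasDerivAt (fun t => log (c * t + d)) (c / (c * t + d)) t :=
    (hlin d t).log h.ne'
  have hinv (d t : ℝ) (h : 0 < c * t + d) :
      HasDerivAt (fun t => c / (c * t + d)) (-(c ^ 2 / (c * t + d) ^ 2)) t := by
    refine ((hasDerivAt_const t c).div (hlin d t) h.ne').congr_deriv ?_
    ring
  refine ConcaveOn.congr (f := fun t => t * (log (c * t + (b + a)) - log (c * t + b))) ?_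
    fun t ht => ?_
  · refine concaveOn_of_hasDerivWithinAt2_nonpos (convex_Ioi 0)
      (f' := fun t => log (c * t + (b + a)) - log (c * t + b) +
        t * (c / (c * t + (b + a)) - c / (c * t + b)))
      (f'' := fun t => -(c * a * ((a + 2 * b) * (c * t + b) + a * b)) /
        ((c * t + b) ^ 2 * (c * t + (b + a)) ^ 2)) ?_ ?_ ?_ ?_ <;> try simp only [interior_Ioi]
    · exact continuousOn_id.mul <|
        ((by fun_prop : ContinuousOn (fun t => c * t + (b + a)) _).log
          fun t ht => (hua t ht).ne').sub
        ((by fun_prop : ContinuousOn (fun t => c * t + b) _).log fun t ht => (hu t ht).ne')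
    · intro t ht
      refine (((hasDerivAt_id' t).fun_mul
        ((hlog _ t (hua t ht)).fun_sub (hlog b t (hu t ht)))).congr_deriv ?_).hasDerivWithinAt
      ring
    · intro t ht
      have hA := hua t ht
      have hB := hu t ht
      refine ((((hlog _ t hA).fun_sub (hlog b t hB)).fun_add ((hasDerivAt_id' t).fun_mul
        ((hinv _ t hA).fun_sub (hinv b t hB)))).congr_deriv ?_).hasDerivWithinAt
      field_simp
      ring
    · intro t ht
      have := hu t ht
      have : 0 ≤ c * a * ((a + 2 * b) * (c * t + b) + a * b) := by positivity
      exact div_nonpos_of_nonpos_of_nonneg (neg_nonpos.2 this) (by positivity)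
  · have hne := (hu t ht).ne'
    dsimp only
    rw [← log_div (hua t ht).ne' hne]
    congr 2
    field_simp
    ring

theorem lcd_sum_throughput_concave_in_tau_general (K : ℕ)
    (σ2 : ℝ) (hσ2 : 0 < σ2) (g E : Fin K → ℝ)
    (hg : ∀ i, 0 ≤ g i) (hE : ∀ i, 0 ≤ E i) :
    ConcaveOn ℝ (Set.Ico (0 : ℝ) 1)
      (fun τ =>
        ∑ i : Fin K,
          (1 - τ) *
            Real.logb 2
              (1 + g i * E i /
                (σ2 * (1 - τ) +
                  ∑ j ∈ Finset.univ.filter (fun j => j ≠ i), g j * E j))) := by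
  refine ConcaveOn.sum (convex_Ico 0 1) fun i _ => ?_
  have hinterference : 0 ≤ ∑ j ∈ univ.filter (· ≠ i), g j * E j :=
    sum_nonneg fun j _ => mul_nonneg (hg j) (hE j)
  have hrate := (concaveOn_mul_log_one_add_div (mul_nonneg (hg i) (hE i)) hinterference
    hσ2).comp_one_sub.subset (fun τ hτ => sub_pos.2 hτ.2) (convex_Ico 0 1)
  refine (hrate.smul (inv_nonneg.2 (log_nonneg one_le_two))).congr fun τ _ => ?_
  simp only [smul_eq_mul, logb]
  ring

/-- Fix `K ≥ 1`, `σ² > 0`, channel gains `g i ≥ 0` and energies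
`E i ≥ 0` with `g i * E i > 0` for each `i`. The LCD sum throughput
`τ ↦ ∑_i (1 - τ) log₂(1 + g i E i / (σ² (1 - τ) + ∑_{j ≠ i} g j E j))`
is concave on `[0, 1)`. -/
theorem lcd_sum_throughput_concave_in_tau (K : ℕ) (hK : 1 ≤ K)
    (σ2 : ℝ) (hσ2 : 0 < σ2) (g E : Fin K → ℝ)
    (hg : ∀ i, 0 ≤ g i) (hE : ∀ i, 0 ≤ E i) (hgE : ∀ i, 0 < g i * E i) :
    ConcaveOn ℝ (Set.Ico (0 : ℝ) 1)
      (fun τ =>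
        ∑ i : Fin K,
          (1 - τ) *
            Real.logb 2
              (1 + g i * E i /
                (σ2 * (1 - τ) +
                  ∑ j ∈ Finset.univ.filter (fun j => j ≠ i), g j * E j))) :=
  lcd_sum_throughput_concave_in_tau_general K σ2 hσ2 g E hg hE
end

section
/- Let N > 0 and a ≥ b ≥ 0. Then min( log₂(1 + a/(N + b)), log₂(1 + b/N) ) ≥ min( log₂(1 + a/N), log₂(1 + b/(N + a)) ); that is, with two users under SICD, decoding the stronger received signal first yields a minimum user rate at least as large as decoding the weaker signal first. -/
/-! Decoding the weaker user first gives it the rate `log₂(1 + b/(N + a))`, and this single rate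
is already below both rates of the strongest-first order, since `b/(N + a)` is below both
`a/(N + b)` and `b/N`. -/

lemma logb_one_add_le_logb_one_add {c x y : ℝ} (hc : 1 < c) (hx : 0 ≤ x) (hxy : x ≤ y) :
    Real.logb c (1 + x) ≤ Real.logb c (1 + y) :=
  Real.logb_le_logb_of_le hc (by linarith) (by linarith)

lemma div_add_le_div_add_of_le {N a b : ℝ} (hN : 0 < N) (hb : 0 ≤ b) (hba : b ≤ a) :
    b / (N + a) ≤ a / (N + b) := by
  rw [div_le_div_iff₀ (by linarith) (by linarith)]
  nlinarith

/-- Let `N > 0` and `a ≥ b ≥ 0`. Then with two users under SICD,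
decoding the stronger received signal first yields a minimum user rate at
least as large as decoding the weaker signal first. -/
theorem strongest_first_maximizes_min_rate (N a b : ℝ)
    (hN : 0 < N) (hba : b ≤ a) (hb : 0 ≤ b) :
    min (Real.logb 2 (1 + a / N)) (Real.logb 2 (1 + b / (N + a))) ≤
      min (Real.logb 2 (1 + a / (N + b))) (Real.logb 2 (1 + b / N)) := by
  have hNa : 0 < N + a := by linarith
  have hweak : 0 ≤ b / (N + a) := div_nonneg hb hNa.le
  calc min (Real.logb 2 (1 + a / N)) (Real.logb 2 (1 + b / (N + a)))
      ≤ Real.logb 2 (1 + b / (N + a)) := min_le_right _ _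
    _ ≤ min (Real.logb 2 (1 + a / (N + b))) (Real.logb 2 (1 + b / N)) :=
      le_min
        (logb_one_add_le_logb_one_add one_lt_two hweak (div_add_le_div_add_of_le hN hb hba))
        (logb_one_add_le_logb_one_add one_lt_two hweak
          (div_le_div_of_nonneg_left hb hN (by linarith)))
end
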